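/- arXiv:1910.09018 — 3 statements merged into one kernel-verified Lean document; each statement's English description precedes it below -/
import Mathlib

section
/- In the quantum plane S with relation z₂z₁ = μ z₁z₂ (μ ∈ k×), every nonzero homogeneous quadratic form q ∈ S₂ admits at most two factorizations q = L·L′ with L, L′ ∈ S₁ nonzero linear forms, up to rescaling (L, L′) ↦ (λL, λ⁻¹L′) with λ ∈ k×. -/
noncomputable section

/-- Relations of the skew polynomial algebra: `z j * z i = μ i j • (z i * z j)`. -/
inductive SkewRel (k : Type) [Field k] (n : ℕ) (μ : Fin n → Fin n → k) :
    FreeAlgebra k (Fin n) → FreeAlgebra k (Fin n) → Prop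
  | rel (i j : Fin n) :
      SkewRel k n μ (FreeAlgebra.ι k j * FreeAlgebra.ι k i)
        (μ i j • (FreeAlgebra.ι k i * FreeAlgebra.ι k j))

/-- The skew polynomial algebra `S`. -/
abbrev SkewAlg (k : Type) [Field k] (n : ℕ) (μ : Fin n → Fin n → k) : Type :=
  RingQuot (SkewRel k n μ)

/-- The generators `z i` of `S`. -/
def zgen (k : Type) [Field k] (n : ℕ) (μ : Fin n → Fin n → k) (i : Fin n) :
    SkewAlg k n μ :=
  RingQuot.mkAlgHom k (SkewRel k n μ) (FreeAlgebra.ι k i)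

/-- The degree-one component `S₁` (span of the generators). -/
def Sone (k : Type) [Field k] (n : ℕ) (μ : Fin n → Fin n → k) :
    Submodule k (SkewAlg k n μ) :=
  Submodule.span k (Set.range (zgen k n μ))

/-- The degree-two component `S₂` (span of products of two generators). -/
def Stwo (k : Type) [Field k] (n : ℕ) (μ : Fin n → Fin n → k) :
    Submodule k (SkewAlg k n μ) :=
  Submodule.span k {x | ∃ i j, x = zgen k n μ i * zgen k n μ j}

open Polynomial

variable {k : Type} [Field k]

/-- Multiplication by `X` on `k[X]`. -/
def Tlin (k : Type) [Field k] : Module.End k k[X] := LinearMap.mulLeft k (X : k[X])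

/-- Substitution `X ↦ μ X` on `k[X]`. -/
def Slin (μ : k) : Module.End k k[X] := (aeval (C μ * X) : k[X] →ₐ[k] k[X]).toLinearMap

lemma slin_tlin (μ : k) : Slin μ * Tlin k = μ • (Tlin k * Slin μ) := by
  refine LinearMap.ext fun p => ?_
  simp only [Slin, Tlin, Module.End.mul_apply, LinearMap.smul_apply,
    LinearMap.mulLeft_apply, AlgHom.toLinearMap_apply, map_mul, aeval_X,
    Polynomial.smul_eq_C_mul]
  ring

lemma tlin_slin (μ : k) (hμ : μ ≠ 0) : Tlin k * Slin μ = μ⁻¹ • (Slin μ * Tlin k) := by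
  rw [slin_tlin, smul_smul, inv_mul_cancel₀ hμ, one_smul]

/-- A representation of the quantum plane on `k[X]`. -/
def rep (μ : k) (hμ : μ ≠ 0) :
    SkewAlg k 2 ![![1, μ], ![μ⁻¹, 1]] →ₐ[k] Module.End k k[X] :=
  RingQuot.liftAlgHom k ⟨FreeAlgebra.lift k ![Tlin k, Slin μ], by
    rintro x y ⟨i, j⟩
    fin_cases i <;> fin_cases j <;>
      simp [map_mul, map_smul, FreeAlgebra.lift_ι_apply, Matrix.cons_val_zero,
        Matrix.cons_val_one, Matrix.head_cons]
    · exact slin_tlin μ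
    · exact tlin_slin μ hμ⟩

lemma rep_zgen (μ : k) (hμ : μ ≠ 0) (i : Fin 2) :
    rep μ hμ (zgen k 2 ![![1, μ], ![μ⁻¹, 1]] i) = ![Tlin k, Slin μ] i := by
  rw [zgen, rep, RingQuot.liftAlgHom_mkAlgHom_apply, FreeAlgebra.lift_ι_apply]

lemma prod_eval (μ : k) (hμ : μ ≠ 0) (a b c d : k) :
    rep μ hμ ((a • zgen k 2 ![![1, μ], ![μ⁻¹, 1]] 0 + b • zgen k 2 ![![1, μ], ![μ⁻¹, 1]] 1) *
        (c • zgen k 2 ![![1, μ], ![μ⁻¹, 1]] 0 + d • zgen k 2 ![![1, μ], ![μ⁻¹, 1]] 1)) 1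
      = C (b * d) + C (a * d + μ * (c * b)) * X + C (a * c) * X ^ 2 := by
  simp only [map_mul, map_add, map_smul, rep_zgen, Matrix.cons_val_zero, Matrix.cons_val_one,
    Matrix.head_cons, Module.End.mul_apply, LinearMap.add_apply, LinearMap.smul_apply,
    Tlin, Slin, LinearMap.mulLeft_apply, AlgHom.toLinearMap_apply, mul_one,
    Polynomial.smul_eq_C_mul, map_add, map_mul, map_one, aeval_X, aeval_C,
    Polynomial.algebraMap_eq]
  ring

lemma coeffs_of_eq {c0 c1 c2 d0 d1 d2 : k}
    (h : C c0 + C c1 * X + C c2 * X ^ 2 = C d0 + C d1 * X + C d2 * X ^ 2) :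
    c0 = d0 ∧ c1 = d1 ∧ c2 = d2 := by
  refine ⟨?_, ?_, ?_⟩
  · have := congrArg (fun p => Polynomial.coeff p 0) h
    simpa using this
  · have := congrArg (fun p => Polynomial.coeff p 1) h
    simpa using this
  · have := congrArg (fun p => Polynomial.coeff p 2) h
    simpa using this

lemma two_fac_a {μ a1 b1 a2 b2 a3 b3 a4 b4 : k} (hμ : μ ≠ 0)
    (ha1 : a1 ≠ 0) (ha3 : a3 ≠ 0)
    (hA : a1 * a2 = a3 * a4) (hB : a1 * b2 + μ * (a2 * b1) = a3 * b4 + μ * (a4 * b3))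
    (hs : b1 * a3 = b3 * a1) :
    ∃ l : k, l ≠ 0 ∧ a3 = l * a1 ∧ b3 = l * b1 ∧ a4 = l⁻¹ * a2 ∧ b4 = l⁻¹ * b2 := by
  have key : a1 * (a3 * b4) = a1 * (a1 * b2) := by
    linear_combination -a1 * hB + μ * a4 * hs + μ * b1 * hA
  refine ⟨a3 / a1, div_ne_zero ha3 ha1, by field_simp, ?_, ?_, ?_⟩
  · field_simp
    linear_combination -hs
  · field_simp
    linear_combination -hA
  · field_simp
    linear_combination mul_left_cancel₀ ha1 key

lemma two_fac_b {μ a1 b1 a2 b2 a3 b3 a4 b4 : k} (hμ : μ ≠ 0)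
    (hb1 : b1 ≠ 0) (hb3 : b3 ≠ 0)
    (hC : b1 * b2 = b3 * b4) (hB : a1 * b2 + μ * (a2 * b1) = a3 * b4 + μ * (a4 * b3))
    (hu : a1 * b3 = a3 * b1) :
    ∃ l : k, l ≠ 0 ∧ a3 = l * a1 ∧ b3 = l * b1 ∧ a4 = l⁻¹ * a2 ∧ b4 = l⁻¹ * b2 := by
  have key : μ * (b1 * (b3 * a4)) = μ * (b1 * (b1 * a2)) := by
    linear_combination -b1 * hB + a1 * hC + b4 * hu
  have key2 := mul_left_cancel₀ hb1 (mul_left_cancel₀ hμ key)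
  refine ⟨b3 / b1, div_ne_zero hb3 hb1, ?_, by field_simp, ?_, ?_⟩
  · field_simp
    linear_combination -hu
  · field_simp
    linear_combination key2
  · field_simp
    linear_combination -hC

lemma roots_a {μ a1 b1 a2 b2 a3 b3 a4 b4 a5 b5 a6 b6 : k} (hμ : μ ≠ 0)
    (ha1 : a1 ≠ 0) (ha2 : a2 ≠ 0)
    (hA1 : a1 * a2 = a3 * a4) (hB1 : a1 * b2 + μ * (a2 * b1) = a3 * b4 + μ * (a4 * b3))
    (hC1 : b1 * b2 = b3 * b4)
    (hA2 : a1 * a2 = a5 * a6) (hB2 : a1 * b2 + μ * (a2 * b1) = a5 * b6 + μ * (a6 * b5))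
    (hC2 : b1 * b2 = b5 * b6) :
    b1 * a3 = b3 * a1 ∨ b1 * a5 = b5 * a1 ∨ b3 * a5 = b5 * a3 := by
  by_cases h13 : b1 * a3 = b3 * a1
  · exact Or.inl h13
  by_cases h15 : b1 * a5 = b5 * a1
  · exact Or.inr (Or.inl h15)
  refine Or.inr (Or.inr ?_)
  have hf13 : (b1 * a3 - b3 * a1) *
      (μ * (a1 * a2) * (b1 * a3 + b3 * a1) - (a1 * b2 + μ * (a2 * b1)) * (a1 * a3)) = 0 := by
    linear_combination (-a1 ^ 2 * μ * b3 ^ 2) * hA1 + (a1 ^ 2 * a3 * b3) * hB1 +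
      (-a1 ^ 2 * a3 ^ 2) * hC1
  have hf15 : (b1 * a5 - b5 * a1) *
      (μ * (a1 * a2) * (b1 * a5 + b5 * a1) - (a1 * b2 + μ * (a2 * b1)) * (a1 * a5)) = 0 := by
    linear_combination (-a1 ^ 2 * μ * b5 ^ 2) * hA2 + (a1 ^ 2 * a5 * b5) * hB2 +
      (-a1 ^ 2 * a5 ^ 2) * hC2
  have e13 := (mul_eq_zero.1 hf13).resolve_left (sub_ne_zero.2 h13)
  have e15 := (mul_eq_zero.1 hf15).resolve_left (sub_ne_zero.2 h15)
  have key : (μ * (a1 * a2) * a1) * (b3 * a5) = (μ * (a1 * a2) * a1) * (b5 * a3) := by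
    linear_combination a5 * e13 - a3 * e15
  exact mul_left_cancel₀ (by simp [hμ, ha1, ha2]) key

lemma roots_b {μ a1 b1 a2 b2 a3 b3 a4 b4 a5 b5 a6 b6 : k} (hμ : μ ≠ 0)
    (hb1 : b1 ≠ 0) (hb2 : b2 ≠ 0)
    (hA1 : a1 * a2 = a3 * a4) (hB1 : a1 * b2 + μ * (a2 * b1) = a3 * b4 + μ * (a4 * b3))
    (hC1 : b1 * b2 = b3 * b4)
    (hA2 : a1 * a2 = a5 * a6) (hB2 : a1 * b2 + μ * (a2 * b1) = a5 * b6 + μ * (a6 * b5))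
    (hC2 : b1 * b2 = b5 * b6) :
    a1 * b3 = a3 * b1 ∨ a1 * b5 = a5 * b1 ∨ a3 * b5 = a5 * b3 := by
  by_cases h13 : a1 * b3 = a3 * b1
  · exact Or.inl h13
  by_cases h15 : a1 * b5 = a5 * b1
  · exact Or.inr (Or.inl h15)
  refine Or.inr (Or.inr ?_)
  have hf13 : (a1 * b3 - a3 * b1) *
      ((b1 * b2) * (a1 * b3 + a3 * b1) - (a1 * b2 + μ * (a2 * b1)) * (b1 * b3)) = 0 := by
    linear_combination (-b1 ^ 2 * a3 ^ 2) * hC1 + (b1 ^ 2 * a3 * b3) * hB1 +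
      (-b1 ^ 2 * μ * b3 ^ 2) * hA1
  have hf15 : (a1 * b5 - a5 * b1) *
      ((b1 * b2) * (a1 * b5 + a5 * b1) - (a1 * b2 + μ * (a2 * b1)) * (b1 * b5)) = 0 := by
    linear_combination (-b1 ^ 2 * a5 ^ 2) * hC2 + (b1 ^ 2 * a5 * b5) * hB2 +
      (-b1 ^ 2 * μ * b5 ^ 2) * hA2
  have e13 := (mul_eq_zero.1 hf13).resolve_left (sub_ne_zero.2 h13)
  have e15 := (mul_eq_zero.1 hf15).resolve_left (sub_ne_zero.2 h15)
  have key : ((b1 * b2) * b1) * (a3 * b5) = ((b1 * b2) * b1) * (a5 * b3) := by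
    linear_combination b5 * e13 - b3 * e15
  exact mul_left_cancel₀ (by simp [hb1, hb2]) key

lemma mem_sone {M : Fin 2 → Fin 2 → k} {L : SkewAlg k 2 M} (h : L ∈ Sone k 2 M) :
    ∃ a b : k, L = a • zgen k 2 M 0 + b • zgen k 2 M 1 := by
  obtain ⟨c, hc⟩ := (Submodule.mem_span_range_iff_exists_fun k).1 h
  exact ⟨c 0, c 1, by rw [← hc, Fin.sum_univ_two]⟩

lemma recon {M : Fin 2 → Fin 2 → k} {L1 L2 L3 L4 : SkewAlg k 2 M} {a1 b1 a2 b2 a3 b3 a4 b4 l : k}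
    (hL1 : L1 = a1 • zgen k 2 M 0 + b1 • zgen k 2 M 1)
    (hL2 : L2 = a2 • zgen k 2 M 0 + b2 • zgen k 2 M 1)
    (hL3 : L3 = a3 • zgen k 2 M 0 + b3 • zgen k 2 M 1)
    (hL4 : L4 = a4 • zgen k 2 M 0 + b4 • zgen k 2 M 1)
    (h : l ≠ 0 ∧ a3 = l * a1 ∧ b3 = l * b1 ∧ a4 = l⁻¹ * a2 ∧ b4 = l⁻¹ * b2) :
    ∃ l : k, l ≠ 0 ∧ L3 = l • L1 ∧ L4 = l⁻¹ • L2 := by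
  obtain ⟨hl, h3, h3', h4, h4'⟩ := h
  exact ⟨l, hl, by rw [hL3, hL1, h3, h3', smul_add, smul_smul, smul_smul],
    by rw [hL4, hL2, h4, h4', smul_add, smul_smul, smul_smul]⟩
/-- In the quantum plane, every nonzero quadratic form admits at most two
factorizations into nonzero linear forms, up to rescaling `(L, L') ↦ (λL, λ⁻¹L')`. -/
theorem stmt1 (k : Type) [Field k] [IsAlgClosed k] (hchar : ringChar k ≠ 2)
    (μ : k) (hμ : μ ≠ 0)
    (q L1 L2 L3 L4 L5 L6 : SkewAlg k 2 ![![1, μ], ![μ⁻¹, 1]])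
    (hq : q ∈ Stwo k 2 ![![1, μ], ![μ⁻¹, 1]]) (hq0 : q ≠ 0)
    (h1 : L1 ∈ Sone k 2 ![![1, μ], ![μ⁻¹, 1]]) (h2 : L2 ∈ Sone k 2 ![![1, μ], ![μ⁻¹, 1]])
    (h3 : L3 ∈ Sone k 2 ![![1, μ], ![μ⁻¹, 1]]) (h4 : L4 ∈ Sone k 2 ![![1, μ], ![μ⁻¹, 1]])
    (h5 : L5 ∈ Sone k 2 ![![1, μ], ![μ⁻¹, 1]]) (h6 : L6 ∈ Sone k 2 ![![1, μ], ![μ⁻¹, 1]])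
    (n1 : L1 ≠ 0) (n2 : L2 ≠ 0) (n3 : L3 ≠ 0) (n4 : L4 ≠ 0) (n5 : L5 ≠ 0) (n6 : L6 ≠ 0)
    (e1 : q = L1 * L2) (e2 : q = L3 * L4) (e3 : q = L5 * L6) :
    (∃ l : k, l ≠ 0 ∧ L3 = l • L1 ∧ L4 = l⁻¹ • L2) ∨
    (∃ l : k, l ≠ 0 ∧ L5 = l • L1 ∧ L6 = l⁻¹ • L2) ∨
    (∃ l : k, l ≠ 0 ∧ L5 = l • L3 ∧ L6 = l⁻¹ • L4) := by
  obtain ⟨a1, b1, hL1⟩ := mem_sone h1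
  obtain ⟨a2, b2, hL2⟩ := mem_sone h2
  obtain ⟨a3, b3, hL3⟩ := mem_sone h3
  obtain ⟨a4, b4, hL4⟩ := mem_sone h4
  obtain ⟨a5, b5, hL5⟩ := mem_sone h5
  obtain ⟨a6, b6, hL6⟩ := mem_sone h6
  have key1 : (C (b1 * b2) + C (a1 * b2 + μ * (a2 * b1)) * X + C (a1 * a2) * X ^ 2 : k[X])
      = C (b3 * b4) + C (a3 * b4 + μ * (a4 * b3)) * X + C (a3 * a4) * X ^ 2 := by
    rw [← prod_eval μ hμ a1 b1 a2 b2, ← prod_eval μ hμ a3 b3 a4 b4,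
      ← hL1, ← hL2, ← hL3, ← hL4, ← e1, ← e2]
  have key2 : (C (b1 * b2) + C (a1 * b2 + μ * (a2 * b1)) * X + C (a1 * a2) * X ^ 2 : k[X])
      = C (b5 * b6) + C (a5 * b6 + μ * (a6 * b5)) * X + C (a5 * a6) * X ^ 2 := by
    rw [← prod_eval μ hμ a1 b1 a2 b2, ← prod_eval μ hμ a5 b5 a6 b6,
      ← hL1, ← hL2, ← hL5, ← hL6, ← e1, ← e3]
  obtain ⟨hC1, hB1, hA1⟩ := coeffs_of_eq key1
  obtain ⟨hC2, hB2, hA2⟩ := coeffs_of_eq key2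
  have hA3 : a3 * a4 = a5 * a6 := by rw [← hA1, hA2]
  have hB3 : a3 * b4 + μ * (a4 * b3) = a5 * b6 + μ * (a6 * b5) := by rw [← hB1, hB2]
  have hC3 : b3 * b4 = b5 * b6 := by rw [← hC1, hC2]
  have nza1 : ¬(a1 = 0 ∧ b1 = 0) := fun ⟨h, h'⟩ =>
    n1 (by rw [hL1, h, h', zero_smul, zero_smul, add_zero])
  have nza2 : ¬(a2 = 0 ∧ b2 = 0) := fun ⟨h, h'⟩ =>
    n2 (by rw [hL2, h, h', zero_smul, zero_smul, add_zero])
  have nza3 : ¬(a3 = 0 ∧ b3 = 0) := fun ⟨h, h'⟩ =>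
    n3 (by rw [hL3, h, h', zero_smul, zero_smul, add_zero])
  have nza4 : ¬(a4 = 0 ∧ b4 = 0) := fun ⟨h, h'⟩ =>
    n4 (by rw [hL4, h, h', zero_smul, zero_smul, add_zero])
  have nza5 : ¬(a5 = 0 ∧ b5 = 0) := fun ⟨h, h'⟩ =>
    n5 (by rw [hL5, h, h', zero_smul, zero_smul, add_zero])
  have nza6 : ¬(a6 = 0 ∧ b6 = 0) := fun ⟨h, h'⟩ =>
    n6 (by rw [hL6, h, h', zero_smul, zero_smul, add_zero])
  rcases eq_or_ne (a1 * a2) 0 with hA | hA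
  · rcases eq_or_ne (b1 * b2) 0 with hC | hC
    · -- degenerate case: the quadratic is a multiple of z₀z₁
      have hA' : a3 * a4 = 0 := by rw [← hA1]; exact hA
      have hC' : b3 * b4 = 0 := by rw [← hC1]; exact hC
      have hA'' : a5 * a6 = 0 := by rw [← hA2]; exact hA
      have hC'' : b5 * b6 = 0 := by rw [← hC2]; exact hC
      have t1 : (a2 = 0 ∧ b1 = 0) ∨ (a1 = 0 ∧ b2 = 0) := by
        rcases mul_eq_zero.1 hA with h | h <;> rcases mul_eq_zero.1 hC with h' | h'
        · exact absurd ⟨h, h'⟩ nza1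
        · exact Or.inr ⟨h, h'⟩
        · exact Or.inl ⟨h, h'⟩
        · exact absurd ⟨h, h'⟩ nza2
      have t3 : (a4 = 0 ∧ b3 = 0) ∨ (a3 = 0 ∧ b4 = 0) := by
        rcases mul_eq_zero.1 hA' with h | h <;> rcases mul_eq_zero.1 hC' with h' | h'
        · exact absurd ⟨h, h'⟩ nza3
        · exact Or.inr ⟨h, h'⟩
        · exact Or.inl ⟨h, h'⟩
        · exact absurd ⟨h, h'⟩ nza4
      have t5 : (a6 = 0 ∧ b5 = 0) ∨ (a5 = 0 ∧ b6 = 0) := by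
        rcases mul_eq_zero.1 hA'' with h | h <;> rcases mul_eq_zero.1 hC'' with h' | h'
        · exact absurd ⟨h, h'⟩ nza5
        · exact Or.inr ⟨h, h'⟩
        · exact Or.inl ⟨h, h'⟩
        · exact absurd ⟨h, h'⟩ nza6
      rcases t1 with ⟨p1, q1⟩ | ⟨p1, q1⟩
      · -- pair 1 has type X : a2 = 0, b1 = 0, so a1 ≠ 0
        have ha1 : a1 ≠ 0 := fun h => nza1 ⟨h, q1⟩
        rcases t3 with ⟨p3, q3⟩ | ⟨p3, q3⟩
        · -- pair 3 type X
          have ha3 : a3 ≠ 0 := fun h => nza3 ⟨h, q3⟩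
          exact Or.inl (recon hL1 hL2 hL3 hL4
            (two_fac_a hμ ha1 ha3 hA1 hB1 (by rw [q1, q3]; ring)).choose_spec)
        · rcases t5 with ⟨p5, q5⟩ | ⟨p5, q5⟩
          · -- pair 5 type X, match pairs 1 and 5
            have ha5 : a5 ≠ 0 := fun h => nza5 ⟨h, q5⟩
            exact Or.inr (Or.inl (recon hL1 hL2 hL5 hL6
              (two_fac_a hμ ha1 ha5 hA2 hB2 (by rw [q1, q5]; ring)).choose_spec))
          · -- pairs 3 and 5 both type Y
            have hb3 : b3 ≠ 0 := fun h => nza3 ⟨p3, h⟩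
            have hb5 : b5 ≠ 0 := fun h => nza5 ⟨p5, h⟩
            exact Or.inr (Or.inr (recon hL3 hL4 hL5 hL6
              (two_fac_b hμ hb3 hb5 hC3 hB3 (by rw [p3, p5]; ring)).choose_spec))
      · -- pair 1 has type Y : a1 = 0, b2 = 0, so b1 ≠ 0
        have hb1 : b1 ≠ 0 := fun h => nza1 ⟨p1, h⟩
        rcases t3 with ⟨p3, q3⟩ | ⟨p3, q3⟩
        · rcases t5 with ⟨p5, q5⟩ | ⟨p5, q5⟩
          · -- pairs 3 and 5 both type X
            have ha3 : a3 ≠ 0 := fun h => nza3 ⟨h, q3⟩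
            have ha5 : a5 ≠ 0 := fun h => nza5 ⟨h, q5⟩
            exact Or.inr (Or.inr (recon hL3 hL4 hL5 hL6
              (two_fac_a hμ ha3 ha5 hA3 hB3 (by rw [q3, q5]; ring)).choose_spec))
          · -- pairs 1 and 5 both type Y
            have hb5 : b5 ≠ 0 := fun h => nza5 ⟨p5, h⟩
            exact Or.inr (Or.inl (recon hL1 hL2 hL5 hL6
              (two_fac_b hμ hb1 hb5 hC2 hB2 (by rw [p1, p5]; ring)).choose_spec))
        · -- pairs 1 and 3 both type Y
          have hb3 : b3 ≠ 0 := fun h => nza3 ⟨p3, h⟩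
          exact Or.inl (recon hL1 hL2 hL3 hL4
            (two_fac_b hμ hb1 hb3 hC1 hB1 (by rw [p1, p3]; ring)).choose_spec)
    · -- C ≠ 0
      have hb1 : b1 ≠ 0 := left_ne_zero_of_mul hC
      have hb2 : b2 ≠ 0 := right_ne_zero_of_mul hC
      have hC' : b3 * b4 ≠ 0 := by rw [← hC1]; exact hC
      have hC'' : b5 * b6 ≠ 0 := by rw [← hC2]; exact hC
      have hb3 : b3 ≠ 0 := left_ne_zero_of_mul hC'
      have hb5 : b5 ≠ 0 := left_ne_zero_of_mul hC''
      rcases roots_b hμ hb1 hb2 hA1 hB1 hC1 hA2 hB2 hC2 with h | h | h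
      · exact Or.inl (recon hL1 hL2 hL3 hL4 (two_fac_b hμ hb1 hb3 hC1 hB1 h).choose_spec)
      · exact Or.inr (Or.inl (recon hL1 hL2 hL5 hL6
          (two_fac_b hμ hb1 hb5 hC2 hB2 h).choose_spec))
      · exact Or.inr (Or.inr (recon hL3 hL4 hL5 hL6
          (two_fac_b hμ hb3 hb5 hC3 hB3 h).choose_spec))
  · -- A ≠ 0
    have ha1 : a1 ≠ 0 := left_ne_zero_of_mul hA
    have ha2 : a2 ≠ 0 := right_ne_zero_of_mul hA
    have hA' : a3 * a4 ≠ 0 := by rw [← hA1]; exact hA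
    have hA'' : a5 * a6 ≠ 0 := by rw [← hA2]; exact hA
    have ha3 : a3 ≠ 0 := left_ne_zero_of_mul hA'
    have ha5 : a5 ≠ 0 := left_ne_zero_of_mul hA''
    rcases roots_a hμ ha1 ha2 hA1 hB1 hC1 hA2 hB2 hC2 with h | h | h
    · exact Or.inl (recon hL1 hL2 hL3 hL4 (two_fac_a hμ ha1 ha3 hA1 hB1 h).choose_spec)
    · exact Or.inr (Or.inl (recon hL1 hL2 hL5 hL6
        (two_fac_a hμ ha1 ha5 hA2 hB2 h).choose_spec))
    · exact Or.inr (Or.inr (recon hL3 hL4 hL5 hL6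
        (two_fac_a hμ ha3 ha5 hA3 hB3 h).choose_spec))
end
end

section
/- A nonzero μ-symmetric matrix M lies in the image of the map Φ (up to nonzero scalar), i.e., M ∈ k×·Φ(a,b) for some nonzero a, b ∈ kⁿ, if and only if the quadratic form zᵀMz factors in S as a product of two nonzero linear forms. Equivalently, the image of Φ on pairs of nonzero vectors is exactly the set of nonzero μ-symmetric matrices whose associated quadratic form has μ-rank at most 2. -/
noncomputable section

namespace Stmt8Aux

variable {k : Type} [Field k] {n : ℕ} (μ : Fin n → Fin n → k)

/-- The truncated representation space: degree 0, 1, 2 components. -/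
abbrev W (k : Type) [Field k] (n : ℕ) : Type := k × (Fin n → k) × (Fin n → Fin n → k)

/-- Canonical image of the monomial `z i * z j` in degree 2. -/
def e (i j : Fin n) : Fin n → Fin n → k :=
  fun p q => if i ≤ j then (if p = i ∧ q = j then 1 else 0)
    else (if p = j ∧ q = i then μ j i else 0)

lemma e_swap (hμ1 : ∀ i, μ i i = 1) (hμ2 : ∀ i j, i ≠ j → μ i j * μ j i = 1)
    (i j : Fin n) : e μ j i = μ i j • e μ i j := by
  funext p q
  simp only [e, Pi.smul_apply, smul_eq_mul]
  rcases lt_trichotomy i j with h | h | h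
  · rw [if_neg (not_le.mpr h), if_pos h.le]
    split_ifs <;> simp
  · subst h
    simp [hμ1 i]
  · rw [if_pos h.le, if_neg (not_le.mpr h)]
    split_ifs with h1
    · rw [mul_comm (μ i j), hμ2 j i (ne_of_lt h)]
    · ring

/-- Left multiplication by `z i` on the truncated space. -/
def T (i : Fin n) : W k n →ₗ[k] W k n where
  toFun w := ((0, fun l => if l = i then w.1 else 0, ∑ j, w.2.1 j • e μ i j) : W k n)
  map_add' w w' := by
    refine Prod.ext (by simp) (Prod.ext ?_ ?_)
    · funext l; by_cases h : l = i <;> simp [h]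
    · simp [add_smul, Finset.sum_add_distrib]
  map_smul' c w := by
    refine Prod.ext (by simp) (Prod.ext ?_ ?_)
    · funext l; by_cases h : l = i <;> simp [h]
    · simp [smul_smul, Finset.smul_sum]

lemma T_apply (i : Fin n) (w : W k n) :
    T μ i w = ((0, fun l => if l = i then w.1 else 0, ∑ j, w.2.1 j • e μ i j) : W k n) := rfl

/-- The algebra map from the free algebra. -/
def phi : FreeAlgebra k (Fin n) →ₐ[k] Module.End k (W k n) :=
  FreeAlgebra.lift k (T μ)

lemma single_sum_smul (x : k) (i : Fin n) (f : Fin n → (Fin n → Fin n → k)) :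
    ∑ l, (if l = i then x else 0) • f l = x • f i := by
  have h : ∀ l, (if l = i then x else 0) • f l
      = if l = i then x • f i else 0 := by
    intro l
    split_ifs with h
    · subst h; rfl
    · simp
  simp [h]

lemma phi_rel (hμ1 : ∀ i, μ i i = 1) (hμ2 : ∀ i j, i ≠ j → μ i j * μ j i = 1)
    {x y : FreeAlgebra k (Fin n)} (h : SkewRel k n μ x y) : phi μ x = phi μ y := by
  cases h with
  | rel i j =>
    rw [map_mul, map_smul, map_mul]
    simp only [phi, FreeAlgebra.lift_ι_apply]
    apply LinearMap.ext; intro w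
    show T μ j (T μ i w) = μ i j • (T μ i (T μ j w))
    simp only [T_apply, Prod.smul_mk, smul_zero]
    refine Prod.ext (by simp) (Prod.ext ?_ ?_)
    · show (fun l => if l = j then (0:k) else 0)
        = μ i j • fun l => if l = i then (0:k) else 0
      funext l; simp
    · show (∑ l, (if l = i then w.1 else 0) • e μ j l)
        = μ i j • ∑ l, (if l = j then w.1 else 0) • e μ i l
      rw [single_sum_smul, single_sum_smul, e_swap μ hμ1 hμ2 i j, smul_comm]

variable (hμ1 : ∀ i, μ i i = 1) (hμ2 : ∀ i j, i ≠ j → μ i j * μ j i = 1)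

/-- The representation of the skew algebra. -/
def psi : SkewAlg k n μ →ₐ[k] Module.End k (W k n) :=
  RingQuot.liftAlgHom k ⟨phi μ, fun _ _ h => phi_rel μ hμ1 hμ2 h⟩

lemma psi_z (i : Fin n) : psi μ hμ1 hμ2 (zgen k n μ i) = T μ i := by
  rw [zgen, psi, RingQuot.liftAlgHom_mkAlgHom_apply]
  simp [phi]

/-- The base point of the representation. -/
def w1 : W k n := ((1:k), 0, 0)

lemma T_w1 (i : Fin n) : T μ i (w1 : W k n) = (0, fun l => if l = i then (1:k) else 0, 0) := by
  rw [T_apply]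
  refine Prod.ext rfl (Prod.ext rfl ?_)
  show (∑ j, (0 : Fin n → k) j • e μ i j) = 0
  simp

lemma T_T_w1 (i j : Fin n) : T μ i (T μ j (w1 : W k n)) = (0, 0, e μ i j) := by
  rw [T_w1, T_apply]
  refine Prod.ext rfl (Prod.ext ?_ ?_)
  · funext l; simp
  · show (∑ l, (if l = j then (1:k) else 0) • e μ i l) = e μ i j
    rw [single_sum_smul, one_smul]

lemma T_lin (a : Fin n → k) (w : W k n) :
    (∑ i, a i • T μ i) w = (0, fun l => a l * w.1, ∑ i, ∑ j, (a i * w.2.1 j) • e μ i j) := by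
  rw [LinearMap.sum_apply]
  simp only [LinearMap.smul_apply, T_apply]
  refine Prod.ext (by simp [Prod.fst_sum]) (Prod.ext ?_ ?_)
  · show (∑ i, a i • ((0:k), fun l => if l = i then w.1 else 0,
      ∑ j, w.2.1 j • e μ i j)).2.1 = fun l => a l * w.1
    rw [Prod.snd_sum, Prod.fst_sum]
    funext l
    rw [Finset.sum_apply]
    simp only [Prod.smul_mk, Pi.smul_apply, smul_eq_mul, mul_ite, mul_zero, mul_one]
    simp [Finset.sum_ite_eq]
  · show (∑ i, a i • ((0:k), fun l => if l = i then w.1 else 0,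
      ∑ j, w.2.1 j • e μ i j)).2.2 = _
    rw [Prod.snd_sum, Prod.snd_sum]
    refine Finset.sum_congr rfl fun i _ => ?_
    simp only [Prod.smul_mk]
    rw [Finset.smul_sum]
    refine Finset.sum_congr rfl fun j _ => ?_
    rw [smul_smul]

lemma psi_lin (a : Fin n → k) :
    psi μ hμ1 hμ2 (∑ i, a i • zgen k n μ i) = ∑ i, a i • T μ i := by
  rw [map_sum]
  simp only [map_smul, psi_z]

lemma eval_lin (a : Fin n → k) :
    psi μ hμ1 hμ2 (∑ i, a i • zgen k n μ i) (w1 : W k n) = (0, a, 0) := by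
  rw [psi_lin, T_lin]
  refine Prod.ext rfl (Prod.ext ?_ ?_)
  · show (fun l => a l * (w1 : W k n).1) = a
    funext l; simp [w1]
  · show (∑ i, ∑ j, (a i * (w1 : W k n).2.1 j) • e μ i j) = 0
    simp [w1]

include hμ1 hμ2 in
lemma lin_ne_zero {a : Fin n → k} (ha : a ≠ 0) :
    (∑ i, a i • zgen k n μ i) ≠ 0 := by
  intro h
  have h2 := eval_lin μ hμ1 hμ2 a
  rw [h, map_zero] at h2
  have h3 : (0 : Fin n → k) = a := congrArg (fun w => w.2.1) h2
  exact ha h3.symm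

lemma eval_quad (C : Fin n → Fin n → k) :
    psi μ hμ1 hμ2 (∑ i, ∑ j, C i j • (zgen k n μ i * zgen k n μ j)) (w1 : W k n)
      = (0, 0, ∑ i, ∑ j, C i j • e μ i j) := by
  rw [map_sum, LinearMap.sum_apply]
  have step : ∀ i : Fin n,
      (psi μ hμ1 hμ2 (∑ j, C i j • (zgen k n μ i * zgen k n μ j))) (w1 : W k n)
        = (0, 0, ∑ j, C i j • e μ i j) := by
    intro i
    rw [map_sum, LinearMap.sum_apply]
    have step2 : ∀ j : Fin n,
        (psi μ hμ1 hμ2 (C i j • (zgen k n μ i * zgen k n μ j))) (w1 : W k n)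
          = (0, 0, C i j • e μ i j) := by
      intro j
      rw [map_smul, LinearMap.smul_apply, map_mul, Module.End.mul_apply, psi_z, psi_z,
        T_T_w1 μ i j]
      refine Prod.ext (by simp) (Prod.ext (by simp) rfl)
    simp only [step2]
    refine Prod.ext (by simp [Prod.fst_sum]) (Prod.ext (by simp [Prod.snd_sum, Prod.fst_sum]) ?_)
    rw [Prod.snd_sum, Prod.snd_sum]
  simp only [step]
  refine Prod.ext (by simp [Prod.fst_sum]) (Prod.ext (by simp [Prod.snd_sum, Prod.fst_sum]) ?_)
  rw [Prod.snd_sum, Prod.snd_sum]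

lemma eval_prod (a b : Fin n → k) :
    psi μ hμ1 hμ2 ((∑ i, a i • zgen k n μ i) * (∑ j, b j • zgen k n μ j)) (w1 : W k n)
      = (0, 0, ∑ i, ∑ j, (a i * b j) • e μ i j) := by
  rw [map_mul, Module.End.mul_apply, eval_lin, psi_lin, T_lin]
  refine Prod.ext rfl (Prod.ext ?_ rfl)
  funext l; simp

lemma sum_e_apply (C : Fin n → Fin n → k) (p q : Fin n) (hpq : p ≤ q) :
    (∑ i, ∑ j, C i j • e μ i j) p q
      = C p q + if p = q then 0 else μ p q * C q p := by
  have key : ∀ i j : Fin n, (C i j • e μ i j) p q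
      = (if i = p ∧ j = q then C p q else 0)
        + (if i = q ∧ j = p ∧ p ≠ q then μ p q * C q p else 0) := by
    intro i j
    simp only [Pi.smul_apply, smul_eq_mul, e]
    by_cases hij : i ≤ j
    · rw [if_pos hij]
      by_cases hA : i = p ∧ j = q
      · obtain ⟨h1, h2⟩ := hA; subst h1; subst h2
        have hc2 : ¬(i = j ∧ j = i ∧ i ≠ j) := by
          rintro ⟨rfl, -, hne⟩; exact hne rfl
        rw [if_pos (⟨rfl, rfl⟩ : i = i ∧ j = j), if_pos (⟨rfl, rfl⟩ : i = i ∧ j = j),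
          if_neg hc2, mul_one, add_zero]
      · have hc1 : ¬(p = i ∧ q = j) := by
          rintro ⟨rfl, rfl⟩; exact hA ⟨rfl, rfl⟩
        have hc2 : ¬(i = q ∧ j = p ∧ p ≠ q) := by
          rintro ⟨rfl, rfl, hne⟩; exact hne (le_antisymm hpq hij)
        rw [if_neg hc1, if_neg hA, if_neg hc2, mul_zero, add_zero]
    · rw [if_neg hij]
      by_cases hB : p = j ∧ q = i
      · obtain ⟨h1, h2⟩ := hB; subst h1; subst h2
        have hne : p ≠ q := fun hh => hij (le_of_eq hh.symm)
        have hc1 : ¬(q = p ∧ p = q) := by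
          rintro ⟨rfl, -⟩; exact hne rfl
        rw [if_pos (⟨rfl, rfl⟩ : p = p ∧ q = q), if_neg hc1,
          if_pos (⟨rfl, rfl, hne⟩ : q = q ∧ p = p ∧ p ≠ q), zero_add, mul_comm]
      · have hc1 : ¬(i = p ∧ j = q) := by
          rintro ⟨rfl, rfl⟩; exact hij hpq
        have hc2 : ¬(i = q ∧ j = p ∧ p ≠ q) := by
          rintro ⟨rfl, rfl, -⟩; exact hB ⟨rfl, rfl⟩
        rw [if_neg hB, if_neg hc1, if_neg hc2, mul_zero, add_zero]
  have happ : (∑ i, ∑ j, C i j • e μ i j) p q = ∑ i, ∑ j, (C i j • e μ i j) p q := by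
    simp only [Finset.sum_apply]
  rw [happ]
  simp only [key, Finset.sum_add_distrib]
  congr 1
  · simp [ite_and, Finset.sum_ite_eq', Finset.sum_ite_eq]
  · by_cases hpq' : p = q
    · simp [hpq', ite_and]
    · simp [hpq', ite_and, Finset.sum_ite_eq', Finset.sum_ite_eq]

lemma zz_swap (i j : Fin n) :
    zgen k n μ j * zgen k n μ i = μ i j • (zgen k n μ i * zgen k n μ j) := by
  have h := RingQuot.mkAlgHom_rel k (SkewRel.rel (k := k) (n := n) (μ := μ) i j)
  simpa only [map_mul, map_smul, zgen] using h

lemma mul_expand (a b : Fin n → k) :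
    (∑ i, a i • zgen k n μ i) * (∑ j, b j • zgen k n μ j)
      = ∑ i, ∑ j, (a i * b j) • (zgen k n μ i * zgen k n μ j) := by
  rw [Finset.sum_mul_sum]
  refine Finset.sum_congr rfl fun i _ => Finset.sum_congr rfl fun j _ => ?_
  rw [smul_mul_assoc, mul_smul_comm, smul_smul]

end Stmt8Aux

/-- A nonzero `μ`-symmetric matrix `M` is a nonzero scalar multiple of
`Φ(a,b)` for some nonzero vectors `a, b` if and only if `zᵀMz` factors as a product of
two nonzero linear forms (i.e. has `μ`-rank at most 2). -/
theorem stmt8 (k : Type) [Field k] [IsAlgClosed k] (hchar : ringChar k ≠ 2)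
    (n : ℕ) (hn : 1 ≤ n) (μ : Fin n → Fin n → k)
    (hμ0 : ∀ i j, μ i j ≠ 0) (hμ1 : ∀ i, μ i i = 1)
    (hμ2 : ∀ i j, i ≠ j → μ i j * μ j i = 1)
    (M : Matrix (Fin n) (Fin n) k) (hM : ∀ i j, M i j = μ i j * M j i) (hM0 : M ≠ 0) :
    (∃ (a b : Fin n → k) (c : k), a ≠ 0 ∧ b ≠ 0 ∧ c ≠ 0 ∧
        M = c • Matrix.of fun i j => a i * b j + μ i j * (a j * b i)) ↔
      (∃ L1 L2 : SkewAlg k n μ, L1 ∈ Sone k n μ ∧ L2 ∈ Sone k n μ ∧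
        L1 ≠ 0 ∧ L2 ≠ 0 ∧
        ∑ i, ∑ j, M i j • (zgen k n μ i * zgen k n μ j) = L1 * L2) := by
  classical
  have h2 : (2:k) ≠ 0 := Ring.two_ne_zero hchar
  constructor
  · rintro ⟨a, b, c, ha, hb, hc, hMeq⟩
    refine ⟨∑ i, a i • zgen k n μ i, (2*c) • ∑ j, b j • zgen k n μ j, ?_, ?_, ?_, ?_, ?_⟩
    · exact Submodule.sum_mem _ fun i _ => Submodule.smul_mem _ _
        (Submodule.subset_span ⟨i, rfl⟩)
    · exact Submodule.smul_mem _ _ (Submodule.sum_mem _ fun i _ => Submodule.smul_mem _ _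
        (Submodule.subset_span ⟨i, rfl⟩))
    · exact Stmt8Aux.lin_ne_zero μ hμ1 hμ2 ha
    · exact smul_ne_zero (mul_ne_zero h2 hc) (Stmt8Aux.lin_ne_zero μ hμ1 hμ2 hb)
    · rw [mul_smul_comm, Stmt8Aux.mul_expand μ a b, Finset.smul_sum]
      have expand : ∀ i j : Fin n, M i j • (zgen k n μ i * zgen k n μ j)
          = (c * (a i * b j)) • (zgen k n μ i * zgen k n μ j)
            + (c * (a j * b i)) • (zgen k n μ j * zgen k n μ i) := by
        intro i j
        rw [Stmt8Aux.zz_swap μ i j, smul_smul, ← add_smul, hMeq]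
        congr 1
        simp only [Matrix.smul_apply, Matrix.of_apply, smul_eq_mul]
        ring
      simp only [expand, Finset.sum_add_distrib]
      have hswap : (∑ i, ∑ j, (c * (a j * b i)) • (zgen k n μ j * zgen k n μ i))
          = ∑ i, ∑ j, (c * (a i * b j)) • (zgen k n μ i * zgen k n μ j) :=
        Finset.sum_comm
      rw [hswap, ← Finset.sum_add_distrib]
      refine Finset.sum_congr rfl fun i _ => ?_
      rw [Finset.smul_sum, ← Finset.sum_add_distrib]
      refine Finset.sum_congr rfl fun j _ => ?_
      rw [smul_smul, ← add_smul]
      congr 1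
      ring
  · rintro ⟨L1, L2, hm1, hm2, hn1, hn2, heq⟩
    obtain ⟨a, ha⟩ := (Submodule.mem_span_range_iff_exists_fun k).mp hm1
    obtain ⟨b, hb⟩ := (Submodule.mem_span_range_iff_exists_fun k).mp hm2
    have ha0 : a ≠ 0 := by
      rintro rfl; apply hn1; rw [← ha]; simp
    have hb0 : b ≠ 0 := by
      rintro rfl; apply hn2; rw [← hb]; simp
    rw [← ha, ← hb] at heq
    have heval := congrArg (fun x => Stmt8Aux.psi μ hμ1 hμ2 x (Stmt8Aux.w1 : Stmt8Aux.W k n)) heq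
    simp only [Stmt8Aux.eval_quad μ hμ1 hμ2 (fun i j => M i j),
      Stmt8Aux.eval_prod μ hμ1 hμ2 a b] at heval
    have hE : (∑ i, ∑ j, M i j • Stmt8Aux.e μ i j)
        = ∑ i, ∑ j, (a i * b j) • Stmt8Aux.e μ i j :=
      congrArg (fun w => w.2.2) heval
    have key : ∀ p q : Fin n, p ≤ q →
        M p q + (if p = q then 0 else μ p q * M q p)
          = a p * b q + (if p = q then (0:k) else μ p q * (a q * b p)) := by
      intro p q hpq
      have h3 := congrFun (congrFun hE p) q
      rwa [Stmt8Aux.sum_e_apply μ (fun i j => M i j) p q hpq,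
        Stmt8Aux.sum_e_apply μ (fun i j => a i * b j) p q hpq] at h3
    refine ⟨a, b, (2:k)⁻¹, ha0, hb0, inv_ne_zero h2, ?_⟩
    ext p q
    simp only [Matrix.smul_apply, Matrix.of_apply, smul_eq_mul]
    rw [inv_mul_eq_div, eq_div_iff h2]
    rcases lt_trichotomy p q with h | h | h
    · have hk := key p q h.le
      rw [if_neg (ne_of_lt h), if_neg (ne_of_lt h), ← hM p q] at hk
      linear_combination hk
    · subst h
      have hk := key p p le_rfl
      rw [if_pos rfl, if_pos rfl] at hk
      rw [hμ1 p]
      linear_combination 2 * hk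
    · have hk := key q p h.le
      rw [if_neg (ne_of_lt h), if_neg (ne_of_lt h)] at hk
      have huv := hμ2 p q (ne_of_gt h)
      linear_combination μ p q * hk + hM p q + (a p * b q - M p q) * huv
end
end

section
/- In the skew polynomial algebra S on z₁,…,z₄ over an algebraically closed field k of characteristic ≠ 2, with μ₁₂ = μ₁₃ = μ₁₄ = μ₂₄ = μ₃₄ = 1 and μ₂₃ = -1, let a, b ∈ k× with a² ≠ b². Then the quadratic form q₄ + 2a·q₂, where q₂ = z₂z₃ and q₄ = b²z₁² - a²z₂² + z₃² + 2b z₁z₃, factors uniquely up to scalar as (b z₁ + a z₂ + z₃)(b z₁ - a z₂ + z₃). -/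
noncomputable section

/-- The multiplicative parameters of Example 1: `μ₂₃ = μ₃₂ = -1`, all other `μᵢⱼ = 1`
(0-indexed: the generators `z₁,…,z₄` are `z 0,…,z 3`). -/
def muEx1 (k : Type) [Field k] : Fin 4 → Fin 4 → k := fun i j =>
  if (i = 1 ∧ j = 2) ∨ (i = 2 ∧ j = 1) then -1 else 1

/-!
The relations of `S` hold for the `2 × 2` matrices over `k[X]` sending `z₁, z₂, z₃, z₄` to
`X • 1`, `X² • σₓ`, `X⁴ • σ_z`, `X⁸ • 1`, since `σₓ` and `σ_z` anticommute. The exponents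
`2ⁱ + 2ʲ` are pairwise distinct, so in the image of a product `L₁ L₂` of linear forms the
coefficient of `X^(2ⁱ + 2ʲ)` is the coefficient of `zᵢ zⱼ`. For a factorization of
`q₄ + 2a q₂` seven of these equations already force `L₁, L₂` to be reciprocal multiples of
`b z₁ + a z₂ + z₃` and `b z₁ - a z₂ + z₃`.
-/

open Polynomial

namespace SkewAlg

variable {k : Type} [Field k] {n : ℕ} {μ : Fin n → Fin n → k} {A : Type*} [Semiring A] [Algebra k A]

theorem zgen_mul_zgen (i j : Fin n) :
    zgen k n μ j * zgen k n μ i = μ i j • (zgen k n μ i * zgen k n μ j) := by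
  simpa only [zgen, map_mul, map_smul] using RingQuot.mkAlgHom_rel k (SkewRel.rel (μ := μ) i j)

def lift (f : Fin n → A)
    (hf : ∀ i j, f j * f i = μ i j • (f i * f j)) : SkewAlg k n μ →ₐ[k] A :=
  RingQuot.liftAlgHom k ⟨FreeAlgebra.lift k f, by
    rintro _ _ ⟨i, j⟩
    simp only [map_mul, map_smul, FreeAlgebra.lift_ι_apply]
    exact hf i j⟩

@[simp]
theorem lift_zgen (f : Fin n → A)
    (hf : ∀ i j, f j * f i = μ i j • (f i * f j)) (i : Fin n) :
    lift f hf (zgen k n μ i) = f i := by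
  simp only [lift, zgen, RingQuot.liftAlgHom_mkAlgHom_apply, FreeAlgebra.lift_ι_apply]

end SkewAlg

section Example1

variable {k : Type} [Field k]

local notation "z" => zgen k 4 (muEx1 k)

theorem muEx1_one_two : muEx1 k 1 2 = -1 := by simp [muEx1]

def ex1Sign : Fin 4 → Matrix (Fin 2) (Fin 2) k[X] :=
  ![1, !![0, 1; 1, 0], !![1, 0; 0, -1], 1]

theorem ex1Sign_mul_ex1Sign (i j : Fin 4) :
    ex1Sign (k := k) j * ex1Sign i = muEx1 k i j • (ex1Sign i * ex1Sign j) := by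
  fin_cases i <;> fin_cases j <;> simp [ex1Sign, muEx1]

def ex1Rep : SkewAlg k 4 (muEx1 k) →ₐ[k] Matrix (Fin 2) (Fin 2) k[X] :=
  SkewAlg.lift (fun i => (X : k[X]) ^ 2 ^ (i : ℕ) • ex1Sign i) fun i j => by
    rw [smul_mul_smul_comm, smul_mul_smul_comm, ex1Sign_mul_ex1Sign, smul_comm, ← pow_add,
      ← pow_add, add_comm]

theorem ex1Rep_linearCombination (c : Fin 4 → k) :
    ex1Rep (Fintype.linearCombination k z c) =
      !![C (c 0) * X + C (c 2) * X ^ 4 + C (c 3) * X ^ 8, C (c 1) * X ^ 2;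
        C (c 1) * X ^ 2, C (c 0) * X - C (c 2) * X ^ 4 + C (c 3) * X ^ 8] := by
  refine Matrix.ext fun i j => ?_
  fin_cases i <;> fin_cases j <;>
    simp [Fintype.linearCombination_apply, Fin.sum_univ_four, ex1Rep, ex1Sign, smul_eq_C_mul,
      ← sub_eq_add_neg]

theorem ex1Rep_linearCombination_mul_apply_zero_zero (c d : Fin 4 → k) :
    ex1Rep (Fintype.linearCombination k z c * Fintype.linearCombination k z d) 0 0 =
      C (c 0 * d 0) * X ^ 2 + C (c 1 * d 1) * X ^ 4 + C (c 0 * d 2 + c 2 * d 0) * X ^ 5 +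
        C (c 2 * d 2) * X ^ 8 + C (c 0 * d 3 + c 3 * d 0) * X ^ 9 +
        C (c 2 * d 3 + c 3 * d 2) * X ^ 12 + C (c 3 * d 3) * X ^ 16 := by
  simp only [map_mul, ex1Rep_linearCombination, Matrix.mul_fin_two, Matrix.of_apply,
    Matrix.cons_val', Matrix.cons_val_zero, Matrix.empty_val', Matrix.cons_val_fin_one, map_add]
  ring

theorem ex1Rep_linearCombination_mul_apply_zero_one (c d : Fin 4 → k) :
    ex1Rep (Fintype.linearCombination k z c * Fintype.linearCombination k z d) 0 1 =
      C (c 0 * d 1 + c 1 * d 0) * X ^ 3 + C (c 2 * d 1 - c 1 * d 2) * X ^ 6 +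
        C (c 1 * d 3 + c 3 * d 1) * X ^ 10 := by
  simp only [map_mul, ex1Rep_linearCombination, Matrix.mul_fin_two, Matrix.of_apply,
    Matrix.cons_val', Matrix.cons_val_zero, Matrix.cons_val_one, Matrix.empty_val',
    Matrix.cons_val_fin_one, map_add, map_sub]
  ring

theorem ex1_coeff_eqs_of_mul_eq {c d c' d' : Fin 4 → k}
    (h : Fintype.linearCombination k z c * Fintype.linearCombination k z d =
      Fintype.linearCombination k z c' * Fintype.linearCombination k z d') :
    c 0 * d 0 = c' 0 * d' 0 ∧ c 1 * d 1 = c' 1 * d' 1 ∧ c 2 * d 2 = c' 2 * d' 2 ∧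
      c 3 * d 3 = c' 3 * d' 3 ∧ c 0 * d 2 + c 2 * d 0 = c' 0 * d' 2 + c' 2 * d' 0 ∧
      c 2 * d 3 + c 3 * d 2 = c' 2 * d' 3 + c' 3 * d' 2 ∧
      c 2 * d 1 - c 1 * d 2 = c' 2 * d' 1 - c' 1 * d' 2 := by
  have h00 (m : ℕ) := congrArg (fun x => (ex1Rep x 0 0).coeff m) h
  have h01 (m : ℕ) := congrArg (fun x => (ex1Rep x 0 1).coeff m) h
  simp only [ex1Rep_linearCombination_mul_apply_zero_zero,
    ex1Rep_linearCombination_mul_apply_zero_one, coeff_add, coeff_C_mul_X_pow] at h00 h01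
  exact ⟨by simpa using h00 2, by simpa using h00 4, by simpa using h00 8, by simpa using h00 16,
    by simpa using h00 5, by simpa using h00 12, by simpa using h01 6⟩

theorem ex1_exists_eq_smul_of_coeff_eqs (a b : k) {c d : Fin 4 → k} (h0 : c 0 * d 0 = b ^ 2)
    (h1 : c 1 * d 1 = -a ^ 2) (h2 : c 2 * d 2 = 1) (h3 : c 3 * d 3 = 0)
    (h02 : c 0 * d 2 + c 2 * d 0 = 2 * b) (h23 : c 2 * d 3 + c 3 * d 2 = 0)
    (h12 : c 2 * d 1 - c 1 * d 2 = -(2 * a)) :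
    ∃ l : k, l ≠ 0 ∧ c = l • ![b, a, 1, 0] ∧ d = l⁻¹ • ![b, -a, 1, 0] := by
  have hc2 : c 2 ≠ 0 := left_ne_zero_of_mul_eq_one h2
  have hd2 : d 2 = (c 2)⁻¹ := eq_inv_of_mul_eq_one_right h2
  have hc3 : c 3 = 0 := by
    rcases mul_eq_zero.mp h3 with h | h
    · exact h
    · simpa [h, right_ne_zero_of_mul_eq_one h2] using h23
  have hd3 : d 3 = 0 := by simpa [hc3, hc2] using h23
  -- `(c₀d₂ - b)² = -(c₀d₀)(c₂d₂) + b² = 0`, using `c₀d₂ - 2b = -c₂d₀`; likewise for `c₂d₁ + a`.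
  have hb : c 0 * d 2 = b := by
    have : (c 0 * d 2 - b) ^ 2 = 0 := by
      linear_combination (c 0 * d 2) * h02 - (c 2 * d 2) * h0 - b ^ 2 * h2
    linear_combination pow_eq_zero_iff two_ne_zero |>.mp this
  have ha : c 2 * d 1 = -a := by
    have : (c 2 * d 1 + a) ^ 2 = 0 := by
      linear_combination (c 2 * d 1) * h12 + (c 2 * d 2) * h1 - a ^ 2 * h2
    linear_combination pow_eq_zero_iff two_ne_zero |>.mp this
  refine ⟨c 2, hc2, funext fun i => ?_, funext fun i => ?_⟩ <;> fin_cases i <;>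
    simp [hc3, hd3, hd2]
  · linear_combination c 2 * hb - c 0 * h2
  · linear_combination -c 1 * h2 - c 2 * h12 + c 2 * ha
  · linear_combination -d 0 * h2 + d 2 * (h02 - hb) + b * hd2
  · linear_combination -d 1 * h2 + d 2 * ha - a * hd2

theorem ex1_factorization (a b : k) :
    (b ^ 2) • (z 0 * z 0) - (a ^ 2) • (z 1 * z 1) + z 2 * z 2 + (2 * b) • (z 0 * z 2) +
        (2 * a) • (z 1 * z 2) =
      (b • z 0 + a • z 1 + z 2) * (b • z 0 - a • z 1 + z 2) := by
  have h10 : z 1 * z 0 = z 0 * z 1 := by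
    simpa [muEx1] using SkewAlg.zgen_mul_zgen (μ := muEx1 k) 0 1
  have h20 : z 2 * z 0 = z 0 * z 2 := by
    simpa [muEx1] using SkewAlg.zgen_mul_zgen (μ := muEx1 k) 0 2
  have h21 : z 2 * z 1 = -(z 1 * z 2) := by
    rw [SkewAlg.zgen_mul_zgen, muEx1_one_two]
    exact neg_one_smul k (z 1 * z 2)
  simp only [mul_add, add_mul, mul_sub, smul_mul_assoc, mul_smul_comm, h10, h20, h21]
  module

theorem ex1_linearCombination_left (a b : k) :
    Fintype.linearCombination k z ![b, a, 1, 0] = b • z 0 + a • z 1 + z 2 := by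
  simp [Fintype.linearCombination_apply, Fin.sum_univ_four]

theorem ex1_linearCombination_right (a b : k) :
    Fintype.linearCombination k z ![b, -a, 1, 0] = b • z 0 - a • z 1 + z 2 := by
  simp [Fintype.linearCombination_apply, Fin.sum_univ_four, sub_eq_add_neg]

end Example1

theorem stmt12_general (k : Type) [Field k] (a b : k) :
    letI z := zgen k 4 (muEx1 k)
    letI q := (b ^ 2) • (z 0 * z 0) - (a ^ 2) • (z 1 * z 1) + z 2 * z 2 +
      (2 * b) • (z 0 * z 2) + (2 * a) • (z 1 * z 2)
    q = (b • z 0 + a • z 1 + z 2) * (b • z 0 - a • z 1 + z 2) ∧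
      ∀ L1 L2 : SkewAlg k 4 (muEx1 k),
        L1 ∈ Sone k 4 (muEx1 k) → L2 ∈ Sone k 4 (muEx1 k) → L1 ≠ 0 → L2 ≠ 0 →
          q = L1 * L2 →
            ∃ l : k, l ≠ 0 ∧ L1 = l • (b • z 0 + a • z 1 + z 2) ∧
              L2 = l⁻¹ • (b • z 0 - a • z 1 + z 2) := by
  refine ⟨ex1_factorization a b, fun L1 L2 hL1 hL2 _ _ hq => ?_⟩
  rw [Sone, ← Fintype.range_linearCombination] at hL1 hL2
  obtain ⟨c, rfl⟩ := hL1
  obtain ⟨d, rfl⟩ := hL2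
  rw [ex1_factorization, ← ex1_linearCombination_left, ← ex1_linearCombination_right] at hq
  obtain ⟨h0, h1, h2, h3, h02, h23, h12⟩ := ex1_coeff_eqs_of_mul_eq hq.symm
  simp only [Matrix.cons_val_zero, Matrix.cons_val_one, Matrix.cons_val, mul_one, mul_zero,
    one_mul, add_zero] at h0 h1 h2 h3 h02 h23 h12
  obtain ⟨l, hl, rfl, rfl⟩ := ex1_exists_eq_smul_of_coeff_eqs a b (by linear_combination h0)
    (by linear_combination h1) h2 h3 (by linear_combination h02) h23 (by linear_combination h12)
  rw [map_smul, map_smul, ex1_linearCombination_left, ex1_linearCombination_right]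
  exact ⟨l, hl, rfl, rfl⟩

/-- With `μ₂₃ = -1` and all other `μᵢⱼ = 1`, and `a, b ∈ k×`, `a² ≠ b²`,
the quadratic form `q₄ + 2a q₂ = b²z₁² - a²z₂² + z₃² + 2b z₁z₃ + 2a z₂z₃` factors
uniquely up to scalar as `(bz₁ + az₂ + z₃)(bz₁ - az₂ + z₃)`. -/
theorem stmt12 (k : Type) [Field k] [IsAlgClosed k] (hchar : ringChar k ≠ 2)
    (a b : k) (ha : a ≠ 0) (hb : b ≠ 0) (hab : a ^ 2 ≠ b ^ 2) :
    letI z := zgen k 4 (muEx1 k)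
    letI q := (b ^ 2) • (z 0 * z 0) - (a ^ 2) • (z 1 * z 1) + z 2 * z 2 +
      (2 * b) • (z 0 * z 2) + (2 * a) • (z 1 * z 2)
    q = (b • z 0 + a • z 1 + z 2) * (b • z 0 - a • z 1 + z 2) ∧
      ∀ L1 L2 : SkewAlg k 4 (muEx1 k),
        L1 ∈ Sone k 4 (muEx1 k) → L2 ∈ Sone k 4 (muEx1 k) → L1 ≠ 0 → L2 ≠ 0 →
          q = L1 * L2 →
            ∃ l : k, l ≠ 0 ∧ L1 = l • (b • z 0 + a • z 1 + z 2) ∧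
              L2 = l⁻¹ • (b • z 0 - a • z 1 + z 2) :=
  stmt12_general k a b
end
end
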